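/- arXiv:1702.08532 — 4 statements merged into one kernel-verified Lean document; each statement's English description precedes it below -/
import Mathlib

section
/- Let α : B → P(B') be a set-valued operator whose graph G_α is nonempty. Then α is monotone if and only if f_α(x,y) = ⟨y,x⟩ for every (x,y) ∈ G_α. -/
/- STATEMENT 0: Let α : B → P(B') be a set-valued operator whose graph G_α is nonempty.
Then α is monotone if and only if f_α(x,y) = ⟨y,x⟩ for every (x,y) ∈ G_α. -/

noncomputable section

variable {B : Type*} [NormedAddCommGroup B] [NormedSpace ℝ B]

/-- The graph of a set-valued operator `α : B → P(B')`. -/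
def operatorGraph (α : B → Set (B →L[ℝ] ℝ)) : Set (B × (B →L[ℝ] ℝ)) :=
  {p | p.2 ∈ α p.1}

/-- Monotonicity of a set-valued operator, expressed via its graph. -/
def MonotoneOp (α : B → Set (B →L[ℝ] ℝ)) : Prop :=
  ∀ p ∈ operatorGraph α, ∀ q ∈ operatorGraph α, 0 ≤ (p.2 - q.2) (p.1 - q.1)

/-- The Fitzpatrick function of a set-valued operator:
`f_α(x,y) = sup{⟨y,x₀⟩ + ⟨y₀,x⟩ − ⟨y₀,x₀⟩ : (x₀,y₀) ∈ G_α}`, with values in `ℝ ∪ {±∞}`. -/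
def fitzpatrick (α : B → Set (B →L[ℝ] ℝ)) (x : B) (y : B →L[ℝ] ℝ) : EReal :=
  ⨆ p ∈ operatorGraph α, ((y p.1 + p.2 x - p.2 p.1 : ℝ) : EReal)

theorem fitzpatrick_monotone_iff
    [CompleteSpace B] [TopologicalSpace.SeparableSpace B]
    (hrefl : Function.Surjective (NormedSpace.inclusionInDoubleDual ℝ B))
    (α : B → Set (B →L[ℝ] ℝ)) (hne : (operatorGraph α).Nonempty) :
    MonotoneOp α ↔
      ∀ p ∈ operatorGraph α, fitzpatrick α p.1 p.2 = ((p.2 p.1 : ℝ) : EReal) := by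
  constructor
  · intro hmono p hp
    apply le_antisymm
    · apply iSup₂_le
      intro q hq
      have h := hmono p hp q hq
      have : p.2 q.1 + q.2 p.1 - q.2 q.1 ≤ p.2 p.1 := by
        simp only [ContinuousLinearMap.sub_apply, map_sub] at h
        linarith
      exact_mod_cast EReal.coe_le_coe_iff.mpr this
    · have := le_iSup₂ (f := fun q (_ : q ∈ operatorGraph α) =>
        ((p.2 q.1 + q.2 p.1 - q.2 q.1 : ℝ) : EReal)) p hp
      simp only [add_sub_cancel_right] at this
      exact this
  · intro h p hp q hq
    have hle : fitzpatrick α p.1 p.2 = ((p.2 p.1 : ℝ) : EReal) := h p hp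
    have h2 : ((p.2 q.1 + q.2 p.1 - q.2 q.1 : ℝ) : EReal) ≤ ((p.2 p.1 : ℝ) : EReal) := by
      rw [← hle]
      exact le_iSup₂ (f := fun q (_ : q ∈ operatorGraph α) =>
        ((p.2 q.1 + q.2 p.1 - q.2 q.1 : ℝ) : EReal)) q hq
    have h3 : p.2 q.1 + q.2 p.1 - q.2 q.1 ≤ p.2 p.1 := EReal.coe_le_coe_iff.mp h2
    simp only [ContinuousLinearMap.sub_apply, map_sub]
    linarith
end
end

section
/- Let α : B → P(B') be a set-valued operator whose graph G_α is nonempty. Then α is maximal monotone if and only if both of the following hold: f_α(x,y) ≥ ⟨y,x⟩ for all (x,y) ∈ B × B', and f_α(x,y) = ⟨y,x⟩ if and only if (x,y) ∈ G_α. -/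
/- STATEMENT 1: Let α : B → P(B') be a set-valued operator whose graph G_α is nonempty.
Then α is maximal monotone if and only if both of the following hold:
f_α(x,y) ≥ ⟨y,x⟩ for all (x,y) ∈ B × B', and f_α(x,y) = ⟨y,x⟩ iff (x,y) ∈ G_α. -/

noncomputable section

variable {B : Type*} [NormedAddCommGroup B] [NormedSpace ℝ B]

/-- Maximal monotonicity: monotone, and any pair monotonically related to the whole
graph already belongs to the graph. -/
def MaximalMonotoneOp (α : B → Set (B →L[ℝ] ℝ)) : Prop :=
  MonotoneOp α ∧
    ∀ p : B × (B →L[ℝ] ℝ), (∀ q ∈ operatorGraph α, 0 ≤ (p.2 - q.2) (p.1 - q.1)) →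
      p ∈ operatorGraph α

lemma fitz_term_eq (x : B) (y : B →L[ℝ] ℝ) (q : B × (B →L[ℝ] ℝ)) :
    (y q.1 + q.2 x - q.2 q.1 : ℝ) = y x - (y - q.2) (x - q.1) := by
  simp only [ContinuousLinearMap.sub_apply, map_sub]; ring

lemma term_le_fitz (α : B → Set (B →L[ℝ] ℝ)) (x : B) (y : B →L[ℝ] ℝ)
    {q : B × (B →L[ℝ] ℝ)} (hq : q ∈ operatorGraph α) :
    ((y q.1 + q.2 x - q.2 q.1 : ℝ) : EReal) ≤ fitzpatrick α x y :=
  le_iSup₂ (f := fun p (_ : p ∈ operatorGraph α) =>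
    ((y p.1 + p.2 x - p.2 p.1 : ℝ) : EReal)) q hq

lemma fitz_le_of_related (α : B → Set (B →L[ℝ] ℝ)) (x : B) (y : B →L[ℝ] ℝ)
    (h : ∀ q ∈ operatorGraph α, 0 ≤ (y - q.2) (x - q.1)) :
    fitzpatrick α x y ≤ ((y x : ℝ) : EReal) := by
  refine iSup₂_le fun q hq => ?_
  rw [EReal.coe_le_coe_iff, fitz_term_eq]
  linarith [h q hq]

theorem fitzpatrick_maximal_monotone_iff
    [CompleteSpace B] [TopologicalSpace.SeparableSpace B]
    (hrefl : Function.Surjective (NormedSpace.inclusionInDoubleDual ℝ B))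
    (α : B → Set (B →L[ℝ] ℝ)) (hne : (operatorGraph α).Nonempty) :
    MaximalMonotoneOp α ↔
      ((∀ (x : B) (y : B →L[ℝ] ℝ), ((y x : ℝ) : EReal) ≤ fitzpatrick α x y) ∧
        ∀ (x : B) (y : B →L[ℝ] ℝ),
          fitzpatrick α x y = ((y x : ℝ) : EReal) ↔ (x, y) ∈ operatorGraph α) := by
  constructor
  · rintro ⟨hmono, hmax⟩
    have hge : ∀ (x : B) (y : B →L[ℝ] ℝ), ((y x : ℝ) : EReal) ≤ fitzpatrick α x y := by
      intro x y
      by_contra hlt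
      push_neg at hlt
      have hrel : ∀ q ∈ operatorGraph α, 0 ≤ (y - q.2) (x - q.1) := by
        intro q hq
        have h1 := lt_of_le_of_lt (term_le_fitz α x y hq) hlt
        rw [EReal.coe_lt_coe_iff, fitz_term_eq] at h1
        linarith
      have hmem := hmax (x, y) hrel
      have := term_le_fitz α x y hmem
      simp only at this
      have : ((y x : ℝ) : EReal) ≤ fitzpatrick α x y := by
        refine le_trans (le_of_eq ?_) this
        norm_num
      exact absurd this (not_le_of_gt hlt)
    refine ⟨hge, fun x y => ⟨fun heq => ?_, fun hmem => ?_⟩⟩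
    · refine hmax (x, y) fun q hq => ?_
      have h1 := term_le_fitz α x y hq
      rw [heq, EReal.coe_le_coe_iff, fitz_term_eq] at h1
      linarith
    · refine le_antisymm (fitz_le_of_related α x y fun q hq => hmono (x, y) hmem q hq)
        (hge x y)
  · rintro ⟨hge, hiff⟩
    constructor
    · intro p hp q hq
      have h1 := term_le_fitz α p.1 p.2 hq
      rw [(hiff p.1 p.2).2 hp, EReal.coe_le_coe_iff, fitz_term_eq] at h1
      linarith
    · intro p hrel
      exact (hiff p.1 p.2).1 (le_antisymm (fitz_le_of_related α p.1 p.2 hrel) (hge p.1 p.2))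
end
end

section
/- Let f ∈ F(B), let (x₀,y₀) ∈ G_{α_f}, and let c ∈ ℝ with c > f(x₀,y₀). Then the function h := max{c, f} belongs to F(B), its represented graph satisfies G_{α_h} ⊆ G_{α_f}, and (x₀,y₀) ∈ G_{α_f} \ G_{α_h}; in particular α_h is a monotone operator represented by a function of F(B) which is not maximal monotone, so the class of maximal monotone operators is strictly contained in the class of operators representable by functions in F(B). -/
/- STATEMENT 3: Let f ∈ F(B), let (x₀,y₀) ∈ G_{α_f}, and let c ∈ ℝ with c > f(x₀,y₀).
Then h := max{c, f} belongs to F(B), G_{α_h} ⊆ G_{α_f}, and (x₀,y₀) ∈ G_{α_f} \ G_{α_h};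
in particular α_h is a monotone operator represented by a function of F(B) which is not
maximal monotone (so maximal monotone operators are strictly contained in the
representable ones). -/

noncomputable section

variable {B : Type*} [NormedAddCommGroup B] [NormedSpace ℝ B]

/-- Convexity for extended-real-valued functions on a real vector space. -/
def ERealConvexOn {V : Type*} [AddCommGroup V] [Module ℝ V] (f : V → EReal) : Prop :=
  ∀ x y : V, ∀ t : ℝ, 0 ≤ t → t ≤ 1 →
    f (t • x + (1 - t) • y) ≤ (t : EReal) * f x + ((1 - t : ℝ) : EReal) * f y

/-- `f` is a representative function in Fitzpatrick's class `F(B)`: proper, convex,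
lower semicontinuous, and everywhere above the duality pairing. -/
def IsRepresentative (f : B × (B →L[ℝ] ℝ) → EReal) : Prop :=
  (∃ z, f z ≠ ⊤) ∧ (∀ z, f z ≠ ⊥) ∧ ERealConvexOn f ∧ LowerSemicontinuous f ∧
    ∀ z : B × (B →L[ℝ] ℝ), ((z.2 z.1 : ℝ) : EReal) ≤ f z

/-- The graph of the operator represented by `f`: the contact set `{f = pairing}`. -/
def reprGraph (f : B × (B →L[ℝ] ℝ) → EReal) : Set (B × (B →L[ℝ] ℝ)) :=
  {z | f z = ((z.2 z.1 : ℝ) : EReal)}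

/-- A monotone graph in `B × B'`. -/
def MonotoneGraph (G : Set (B × (B →L[ℝ] ℝ))) : Prop :=
  ∀ p ∈ G, ∀ q ∈ G, 0 ≤ (p.2 - q.2) (p.1 - q.1)

/-- A maximal monotone graph in `B × B'`. -/
def MaximalMonotoneGraph (G : Set (B × (B →L[ℝ] ℝ))) : Prop :=
  MonotoneGraph G ∧
    ∀ p : B × (B →L[ℝ] ℝ), (∀ q ∈ G, 0 ≤ (p.2 - q.2) (p.1 - q.1)) → p ∈ G

theorem max_const_representative_not_maximal
    [CompleteSpace B] [TopologicalSpace.SeparableSpace B]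
    (hrefl : Function.Surjective (NormedSpace.inclusionInDoubleDual ℝ B))
    (f : B × (B →L[ℝ] ℝ) → EReal) (hf : IsRepresentative f)
    (hmax : MaximalMonotoneGraph (reprGraph f))
    (x₀ : B) (y₀ : B →L[ℝ] ℝ) (h₀ : (x₀, y₀) ∈ reprGraph f)
    (c : ℝ) (hc : f (x₀, y₀) < (c : EReal)) :
    IsRepresentative (fun z => max (c : EReal) (f z)) ∧
      reprGraph (fun z => max (c : EReal) (f z)) ⊆ reprGraph f ∧
      (x₀, y₀) ∈ reprGraph f \ reprGraph (fun z => max (c : EReal) (f z)) ∧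
      MonotoneGraph (reprGraph (fun z => max (c : EReal) (f z))) ∧
      ¬ MaximalMonotoneGraph (reprGraph (fun z => max (c : EReal) (f z))) := by

  classical
  set P : B × (B →L[ℝ] ℝ) → EReal := fun z => ((z.2 z.1 : ℝ) : EReal) with hP
  obtain ⟨⟨z₁, hz₁⟩, hbot, hconv, hlsc, hpair⟩ := hf
  have hPle : ∀ z, P z ≤ f z := hpair
  -- f(x₀,y₀) equals the pairing
  have hfx₀ : f (x₀, y₀) = P (x₀, y₀) := h₀
  -- h := max c f
  set h : B × (B →L[ℝ] ℝ) → EReal := fun z => max (c : EReal) (f z) with hh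
  -- subset of graphs
  have hsub : reprGraph h ⊆ reprGraph f := by
    intro z hz
    have h1 : f z ≤ P z := by
      have : f z ≤ h z := le_max_right _ _
      simpa [reprGraph, hP] using this.trans_eq hz
    exact le_antisymm h1 (hPle z)
  -- (x₀,y₀) not in graph of h
  have hnot : (x₀, y₀) ∉ reprGraph h := by
    intro hmem
    have : (c : EReal) ≤ P (x₀, y₀) := (le_max_left _ _).trans_eq hmem
    have : (c : EReal) ≤ f (x₀, y₀) := this.trans_eq hfx₀.symm
    exact absurd this (not_le.2 hc)
  -- representative
  have hrep : IsRepresentative h := by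
    refine ⟨⟨(x₀, y₀), ?_⟩, fun z => ?_, ?_, ?_, fun z => (hPle z).trans (le_max_right _ _)⟩
    · have hfx : f (x₀, y₀) < (c : EReal) := hc
      have : h (x₀, y₀) = (c : EReal) := max_eq_left hfx.le
      simp [this]
    · have : (c : EReal) ≤ h z := le_max_left _ _
      intro hbz
      rw [hbz] at this
      exact absurd this (by simp)
    · -- convexity
      intro x y t ht0 ht1
      have h1t0 : (0:ℝ) ≤ 1 - t := by linarith
      have hmul : ∀ a b : EReal, a ≤ b → ∀ s : ℝ, 0 ≤ s → (s : EReal) * a ≤ (s : EReal) * b := by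
        intro a b hab s hs
        exact mul_le_mul_of_nonneg_left hab (by exact_mod_cast hs)
      have hcc : ((t : EReal) * (c : EReal) + ((1 - t : ℝ) : EReal) * (c : EReal)) = (c : EReal) := by
        rw [← EReal.coe_mul, ← EReal.coe_mul, ← EReal.coe_add]
        norm_num [mul_comm]
        norm_cast
        ring
      have hc1 : (c : EReal) ≤ (t : EReal) * h x + ((1 - t : ℝ) : EReal) * h y := by
        calc (c : EReal) = (t : EReal) * (c : EReal) + ((1 - t : ℝ) : EReal) * (c : EReal) := hcc.symm
        _ ≤ _ := add_le_add (hmul _ _ (le_max_left _ _) t ht0) (hmul _ _ (le_max_left _ _) _ h1t0)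
      have hc2 : f (t • x + (1 - t) • y) ≤ (t : EReal) * h x + ((1 - t : ℝ) : EReal) * h y := by
        refine (hconv x y t ht0 ht1).trans ?_
        exact add_le_add (hmul _ _ (le_max_right _ _) t ht0) (hmul _ _ (le_max_right _ _) _ h1t0)
      exact max_le hc1 hc2
    · -- lower semicontinuity
      intro z y hy
      rcases lt_max_iff.1 hy with hyc | hyf
      · exact Filter.Eventually.of_forall fun z' => lt_max_iff.2 (Or.inl hyc)
      · exact (hlsc z y hyf).mono fun z' hz' => lt_max_iff.2 (Or.inr hz')
  -- monotone
  have hmono : MonotoneGraph (reprGraph h) := by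
    intro p hp q hq
    exact hmax.1 p (hsub hp) q (hsub hq)
  refine ⟨hrep, hsub, ⟨h₀, hnot⟩, hmono, fun hmaxh => hnot (hmaxh.2 (x₀, y₀) fun q hq => hmax.1 (x₀, y₀) h₀ q (hsub hq))⟩
end
end

section
/- Let (Ω,𝒜,μ) be a probability space, n ≥ 1 and p ∈ [1,∞). There exists a constant C > 0 such that for all ξ ∈ ℝⁿ and all u ∈ L^p(Ω;ℝⁿ) with ∫_Ω u dμ = 0, one has ∫_Ω |ξ + u(ω)|^p dμ ≥ C ∫_Ω (|ξ|^p + |u(ω)|^p) dμ = C(|ξ|^p + ∫_Ω |u(ω)|^p dμ). -/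
open MeasureTheory
open scoped ENNReal NNReal

noncomputable section

lemma real_rpow_add_le {p : ℝ} (hp : 1 ≤ p) (a b : ℝ) (ha : 0 ≤ a) (hb : 0 ≤ b) :
    (a + b) ^ p ≤ 2 ^ (p - 1) * (a ^ p + b ^ p) := by
  have h := NNReal.rpow_add_le_mul_rpow_add_rpow ⟨a, ha⟩ ⟨b, hb⟩ hp
  have := (NNReal.coe_le_coe.mpr h)
  push_cast [NNReal.coe_rpow] at this
  exact this

set_option maxHeartbeats 1000000 in
theorem mean_zero_Lp_estimate
    (n : ℕ) (hn : 1 ≤ n)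
    {Ω : Type*} [MeasurableSpace Ω] (μ : Measure Ω) [IsProbabilityMeasure μ]
    (p : ℝ) (hp : 1 ≤ p) :
    ∃ C > (0 : ℝ),
      ∀ (ξ : EuclideanSpace ℝ (Fin n)) (u : Ω → EuclideanSpace ℝ (Fin n)),
        MemLp u (ENNReal.ofReal p) μ → ∫ ω, u ω ∂μ = 0 →
        C * (‖ξ‖ ^ p + ∫ ω, ‖u ω‖ ^ p ∂μ) ≤ ∫ ω, ‖ξ + u ω‖ ^ p ∂μ := by
  have hp0 : (0 : ℝ) < p := lt_of_lt_of_le one_pos hp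
  set P : ℝ≥0∞ := ENNReal.ofReal p with hP
  have hP1 : (1 : ℝ≥0∞) ≤ P := ENNReal.one_le_ofReal.mpr hp
  have hPne0 : P ≠ 0 := by positivity
  have hPnetop : P ≠ ⊤ := ENNReal.ofReal_ne_top
  have hPtoReal : P.toReal = p := ENNReal.toReal_ofReal hp0.le
  refine ⟨(1 + 2 ^ p)⁻¹, by positivity, fun ξ u hu hmean => ?_⟩
  have hξu : MemLp (fun ω => ξ + u ω) P μ := (memLp_const ξ).add hu
  have hIint : Integrable (fun ω => ‖ξ + u ω‖ ^ p) μ := by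
    simpa [hPtoReal] using hξu.integrable_norm_rpow hPne0 hPnetop
  have hBint : Integrable (fun ω => ‖u ω‖ ^ p) μ := by
    simpa [hPtoReal] using hu.integrable_norm_rpow hPne0 hPnetop
  set I : ℝ := ∫ ω, ‖ξ + u ω‖ ^ p ∂μ with hI
  set A : ℝ := ‖ξ‖ ^ p with hA
  set B : ℝ := ∫ ω, ‖u ω‖ ^ p ∂μ with hB
  have hInn : 0 ≤ I := integral_nonneg fun ω => by positivity
  have hAnn : 0 ≤ A := by positivity
  have hu_int : Integrable u μ := hu.integrable hP1
  -- ∫ (ξ + u) = ξ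
  have hmean' : ∫ ω, (ξ + u ω) ∂μ = ξ := by
    rw [integral_add (integrable_const ξ) hu_int, hmean]
    simp
  -- Claim 1: A ≤ I
  have hAI : A ≤ I := by
    have h1 : ‖ξ‖ ≤ ∫ ω, ‖ξ + u ω‖ ∂μ := by
      calc ‖ξ‖ = ‖∫ ω, (ξ + u ω) ∂μ‖ := by rw [hmean']
        _ ≤ ∫ ω, ‖ξ + u ω‖ ∂μ := norm_integral_le_integral_norm _
    have h2 : eLpNorm (fun ω => ξ + u ω) 1 μ ≤ eLpNorm (fun ω => ξ + u ω) P μ :=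
      eLpNorm_le_eLpNorm_of_exponent_le hP1 hξu.aestronglyMeasurable
    have hξu1 : MemLp (fun ω => ξ + u ω) 1 μ :=
      memLp_one_iff_integrable.mpr ((integrable_const ξ).add hu_int)
    rw [hξu1.eLpNorm_eq_integral_rpow_norm one_ne_zero ENNReal.one_ne_top,
      hξu.eLpNorm_eq_integral_rpow_norm hPne0 hPnetop] at h2
    simp only [ENNReal.toReal_one, Real.rpow_one, inv_one, hPtoReal] at h2
    have h3 : ∫ ω, ‖ξ + u ω‖ ∂μ ≤ I ^ p⁻¹ :=
      (ENNReal.ofReal_le_ofReal_iff (Real.rpow_nonneg hInn _)).mp h2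
    calc A = ‖ξ‖ ^ p := rfl
      _ ≤ (I ^ p⁻¹) ^ p :=
        Real.rpow_le_rpow (norm_nonneg _) (h1.trans h3) hp0.le
      _ = I := Real.rpow_inv_rpow hInn hp0.ne'
  -- Claim 2: B ≤ 2^p * I
  have hBI : B ≤ 2 ^ p * I := by
    have hpt : ∀ ω, ‖u ω‖ ^ p ≤ 2 ^ (p - 1) * (‖ξ + u ω‖ ^ p + A) := by
      intro ω
      have h1 : ‖u ω‖ ≤ ‖ξ + u ω‖ + ‖ξ‖ := by
        simpa using norm_sub_le (ξ + u ω) ξ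
      calc ‖u ω‖ ^ p ≤ (‖ξ + u ω‖ + ‖ξ‖) ^ p :=
            Real.rpow_le_rpow (norm_nonneg _) h1 hp0.le
        _ ≤ 2 ^ (p - 1) * (‖ξ + u ω‖ ^ p + ‖ξ‖ ^ p) :=
            real_rpow_add_le hp _ _ (norm_nonneg _) (norm_nonneg _)
    have h2 : B ≤ 2 ^ (p - 1) * (I + A) := by
      calc B ≤ ∫ ω, 2 ^ (p - 1) * (‖ξ + u ω‖ ^ p + A) ∂μ :=
            integral_mono hBint ((hIint.add (integrable_const A)).const_mul _) hpt
        _ = 2 ^ (p - 1) * (I + A) := by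
            rw [integral_const_mul, integral_add hIint (integrable_const A)]
            simp [hI]
    calc B ≤ 2 ^ (p - 1) * (I + A) := h2
      _ ≤ 2 ^ (p - 1) * (I + I) := by
          apply mul_le_mul_of_nonneg_left (by linarith) (by positivity)
      _ = 2 ^ p * I := by
          rw [Real.rpow_sub (by norm_num : (0:ℝ) < 2), Real.rpow_one]
          ring
  -- Conclude
  have h : A + B ≤ (1 + 2 ^ p) * I := by nlinarith
  rw [inv_mul_le_iff₀ (by positivity)]
  linarith
end
end
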